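/- Under the balanced subset construction (each record in exactly M/2 of M candidate subsets, j* uniform), suppose the mechanism output Y satisfies I(S*; Y) ≤ B. Then for any adversary A guessing membership of a fixed record x_i from Y, the success probability p = Pr[A(Y) = 1[x_i ∈ S*]] satisfies KL(p ‖ 1/2) ≤ B, where KL is the binary KL divergence in nats. Consequently p ≤ p*(B) where p*(B) is the unique solution in [1/2,1) of KL(p ‖ 1/2) = B (when B < ln 2). -/

import Mathlib

open MeasureTheory ProbabilityTheory Real Filter
open scoped ENNReal NNReal Classical

noncomputable section

/-- Kullback–Leibler divergence between two measures (in nats), `⊤` if not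
absolutely continuous or not integrable. -/
def klDiv {α : Type*} [MeasurableSpace α] (μ ν : Measure α) : ℝ≥0∞ :=
  if μ ≪ ν ∧ Integrable (fun x => Real.log (μ.rnDeriv ν x).toReal) μ then
    ENNReal.ofReal (∫ x, Real.log (μ.rnDeriv ν x).toReal ∂μ)
  else ⊤

/-- Mutual information `I(X;Y)` of two random variables: KL divergence between the
joint law and the product of the marginal laws. -/
def mutualInfo {Ω α β : Type*} [MeasurableSpace Ω] [MeasurableSpace α] [MeasurableSpace β]
    (μ : Measure Ω) (X : Ω → α) (Y : Ω → β) : ℝ≥0∞ :=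
  klDiv (μ.map fun ω => (X ω, Y ω)) ((μ.map X).prod (μ.map Y))

/-- Binary KL divergence (in nats). -/
def klBin (p q : ℝ) : ℝ := p * Real.log (p / q) + (1 - p) * Real.log ((1 - p) / (1 - q))

lemma klBin_half (x : ℝ) : klBin x (1/2) = Real.log 2 - Real.binEntropy x := by
  rw [klBin]
  have h2 : x / (1/2) = x * 2 := by ring
  have h3 : (1 - x) / (1 - 1/2) = (1 - x) * 2 := by ring
  rw [h2, h3, Real.binEntropy, Real.log_inv, Real.log_inv]
  rcases eq_or_ne x 0 with h | h
  · simp [h]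
  rcases eq_or_ne (1 - x) 0 with h1 | h1
  · have hx1 : x = 1 := by linarith
    simp [hx1]
  rw [Real.log_mul h (by norm_num), Real.log_mul h1 (by norm_num)]
  ring

/-- Binary data-processing inequality for one set. -/
lemma setKL {α : Type*} [MeasurableSpace α] (μ ν : Measure α)
    [IsProbabilityMeasure μ] [IsProbabilityMeasure ν]
    (hAC : μ ≪ ν) (hint : Integrable (llr μ ν) μ) {E : Set α} (hE : MeasurableSet E) :
    (μ E).toReal * Real.log ((μ E).toReal / (ν E).toReal) ≤ ∫ x in E, llr μ ν x ∂μ := by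
  by_cases hμE : μ E = 0
  · simp [hμE, Measure.restrict_eq_zero.mpr hμE]
  have hνE : ν E ≠ 0 := fun h => hμE (hAC h)
  have hμT : μ E ≠ ⊤ := measure_ne_top μ E
  have hνT : ν E ≠ ⊤ := measure_ne_top ν E
  have hμpos : 0 < (μ E).toReal := ENNReal.toReal_pos hμE hμT
  have hνpos : 0 < (ν E).toReal := ENNReal.toReal_pos hνE hνT
  set m := μ.restrict E with hm
  haveI : NeZero m := ⟨by
    simp only [hm, Ne, Measure.restrict_eq_zero]; exact hμE⟩
  have hfi : Integrable (fun x => -llr μ ν x) m := (hint.restrict).neg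
  have hrd : Integrable (fun x => (ν.rnDeriv μ x).toReal) m := by
    refine integrable_toReal_of_lintegral_ne_top
      (Measure.measurable_rnDeriv ν μ).aemeasurable ?_
    exact ((Measure.setLIntegral_rnDeriv_le E).trans_lt (measure_lt_top ν E)).ne
  have hae : (fun x => Real.exp (-llr μ ν x)) =ᵐ[m] fun x => (ν.rnDeriv μ x).toReal :=
    ae_restrict_of_ae (exp_neg_llr hAC)
  have hgi : Integrable (fun x => Real.exp (-llr μ ν x)) m := hrd.congr hae.symm
  have jensen := convexOn_exp.map_average_le continuous_exp.continuousOn isClosed_univ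
    (Eventually.of_forall fun x => Set.mem_univ _) hfi hgi
  have hintE : ∫ x, Real.exp (-llr μ ν x) ∂m ≤ (ν E).toReal := by
    rw [integral_congr_ae hae]
    have h1 : ∫ x, (ν.rnDeriv μ x).toReal ∂m = (∫⁻ x, ν.rnDeriv μ x ∂m).toReal := by
      refine integral_toReal (Measure.measurable_rnDeriv ν μ).aemeasurable ?_
      exact ae_restrict_of_ae (Measure.rnDeriv_lt_top ν μ)
    rw [h1]
    exact ENNReal.toReal_mono hνT (Measure.setLIntegral_rnDeriv_le E)
  have hmE : m Set.univ = μ E := by simp [hm]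
  have havg : ⨍ x, Real.exp (-llr μ ν x) ∂m ≤ (ν E).toReal / (μ E).toReal := by
    rw [average_eq, measureReal_def, hmE, smul_eq_mul, div_eq_inv_mul]
    exact mul_le_mul_of_nonneg_left hintE (by positivity)
  have hpos : (0:ℝ) < (ν E).toReal / (μ E).toReal := by positivity
  have hlog : ⨍ x, -llr μ ν x ∂m ≤ Real.log ((ν E).toReal / (μ E).toReal) :=
    (Real.le_log_iff_exp_le hpos).mpr (le_trans jensen havg)
  rw [average_eq, measureReal_def, hmE, smul_eq_mul, integral_neg] at hlog
  have hlogdiv : Real.log ((μ E).toReal / (ν E).toReal)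
      = - Real.log ((ν E).toReal / (μ E).toReal) := by
    rw [← Real.log_inv]; congr 1; rw [inv_div]
  rw [hlogdiv]
  have hIm : ∫ x, llr μ ν x ∂m = ∫ x in E, llr μ ν x ∂μ := rfl
  rw [hIm] at hlog
  set I := ∫ x in E, llr μ ν x ∂μ
  have h1 : -I ≤ (μ E).toReal * Real.log ((ν E).toReal / (μ E).toReal) := by
    have h2 := mul_le_mul_of_nonneg_left hlog hμpos.le
    rwa [mul_comm ((μ E).toReal⁻¹) (-I), mul_comm, mul_assoc,
      inv_mul_cancel₀ hμpos.ne', mul_one] at h2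
  linarith

/-- **PAC Privacy MIA bound under the balanced construction.** If `I(S*;Y) ≤ B` and the
prior membership probability is `1/2` (each record in exactly `M/2` of the `M` candidate
subsets, `j*` uniform), then any adversary's membership-inference success probability `p`
satisfies `KL(p ‖ 1/2) ≤ B`, and consequently `p ≤ p*(B)` for the solution
`p*(B) ∈ [1/2, 1)` of `KL(p* ‖ 1/2) = B`. -/
theorem pac_mia_bound
    {Ω β : Type*} [MeasurableSpace Ω] [MeasurableSpace β]
    (μ : Measure Ω) [IsProbabilityMeasure μ]
    (M : ℕ) [NeZero M] (hM : Even M)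
    (S : Ω → Fin M) (hS : Measurable S)
    (hunif : μ.map S = (PMF.uniformOfFintype (Fin M)).toMeasure)
    (mem : Fin M → Prop) [DecidablePred mem]
    (hbal : (Finset.univ.filter fun m : Fin M => mem m).card = M / 2)
    (Y : Ω → β) (hY : Measurable Y)
    (B : ℝ) (hB : 0 ≤ B)
    (hMI : mutualInfo μ S Y ≤ ENNReal.ofReal B)
    (A : β → Bool) (hA : Measurable A) :
    klBin ((μ {ω | A (Y ω) = decide (mem (S ω))}).toReal) (1 / 2) ≤ B ∧
    ∀ ps : ℝ, 1 / 2 ≤ ps → ps < 1 → klBin ps (1 / 2) = B →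
      (μ {ω | A (Y ω) = decide (mem (S ω))}).toReal ≤ ps := by
  obtain ⟨k, hk⟩ := hM
  have hkM : M = 2 * k := by omega
  have hk0 : k ≠ 0 := by
    have := NeZero.ne M; omega
  have hM2 : M / 2 = k := by omega
  set μS := μ.map S with hμS
  set μY := μ.map Y with hμY
  set μJ := μ.map (fun ω => (S ω, Y ω)) with hμJ
  set ν := μS.prod μY with hν
  haveI : IsProbabilityMeasure μS := Measure.isProbabilityMeasure_map hS.aemeasurable
  haveI : IsProbabilityMeasure μY := Measure.isProbabilityMeasure_map hY.aemeasurable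
  haveI : IsProbabilityMeasure μJ :=
    Measure.isProbabilityMeasure_map (hS.prodMk hY).aemeasurable
  set E : Set (Fin M × β) := {p | A p.2 = decide (mem p.1)} with hEdef
  have hE : MeasurableSet E := by
    have hEeq : E = ⋃ s : Fin M, ({s} ×ˢ (A ⁻¹' {decide (mem s)})) := by
      ext ⟨s, y⟩
      simp only [hEdef, Set.mem_setOf_eq, Set.mem_iUnion, Set.mem_prod,
        Set.mem_singleton_iff, Set.mem_preimage]
      constructor
      · intro h; exact ⟨s, rfl, h⟩
      · rintro ⟨s', rfl, h⟩; exact h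
    rw [hEeq]
    exact MeasurableSet.iUnion fun s =>
      (measurableSet_singleton s).prod (hA (measurableSet_singleton _))
  -- ν E = 1/2
  set q := μY (A ⁻¹' {true}) with hq
  set q' := μY (A ⁻¹' {false}) with hq'
  have hcompl : A ⁻¹' {false} = (A ⁻¹' {true})ᶜ := by
    ext y; simp
  have hqq' : q + q' = 1 := by
    rw [hq, hq', hcompl]
    exact prob_add_prob_compl (hA (measurableSet_singleton _))
  have hνE : ν E = 2⁻¹ := by
    rw [hν, Measure.prod_apply hE]
    have hpre : ∀ s : Fin M, Prod.mk s ⁻¹' E = A ⁻¹' {decide (mem s)} := by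
      intro s; ext y; simp [hEdef]
    simp_rw [hpre]
    rw [lintegral_fintype]
    have hsing : ∀ s : Fin M, μS {s} = (M : ℝ≥0∞)⁻¹ := by
      intro s
      rw [hunif, PMF.toMeasure_apply_singleton _ _ (measurableSet_singleton s),
        PMF.uniformOfFintype_apply]
      simp
    simp_rw [hsing]
    rw [← Finset.sum_mul]
    have hval : ∀ s : Fin M, μY (A ⁻¹' {decide (mem s)}) = if mem s then q else q' := by
      intro s
      by_cases h : mem s <;> simp [h, hq, hq']
    rw [Finset.sum_congr rfl fun s _ => hval s, Finset.sum_ite, Finset.sum_const,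
      Finset.sum_const]
    have hcard1 : (Finset.univ.filter fun s : Fin M => mem s).card = k := by
      rw [hbal, hM2]
    have hcard2 : (Finset.univ.filter fun s : Fin M => ¬ mem s).card = k := by
      have := Finset.card_filter_add_card_filter_not
        (s := (Finset.univ : Finset (Fin M))) (p := fun s => mem s)
      simp only [Finset.card_univ, Fintype.card_fin] at this
      omega
    rw [hcard1, hcard2, nsmul_eq_mul, nsmul_eq_mul, ← mul_add, hqq', mul_one, hkM]
    have h2k : ((2 * k : ℕ) : ℝ≥0∞) = 2 * (k : ℝ≥0∞) := by push_cast; ring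
    rw [h2k, ENNReal.mul_inv (Or.inl (by norm_num)) (Or.inl (by norm_num)),
      ← mul_assoc, mul_comm (k : ℝ≥0∞) 2⁻¹, mul_assoc,
      ENNReal.mul_inv_cancel (by exact_mod_cast hk0) (ENNReal.natCast_ne_top k), mul_one]
  have hνEc : ν Eᶜ = 2⁻¹ := by
    rw [prob_compl_eq_one_sub hE, hνE]
    exact ENNReal.one_sub_inv_two
  -- extract from hMI
  rw [mutualInfo, ← hμS, ← hμY, ← hμJ, ← hν, klDiv] at hMI
  split_ifs at hMI with hc
  swap
  · exact absurd (top_le_iff.mp hMI) ENNReal.ofReal_ne_top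
  obtain ⟨hAC, hint⟩ := hc
  have hint' : Integrable (llr μJ ν) μJ := hint
  have hIB : ∫ x, llr μJ ν x ∂μJ ≤ B := (ENNReal.ofReal_le_ofReal_iff hB).mp hMI
  -- identify p
  have hpE : μ {ω | A (Y ω) = decide (mem (S ω))} = μJ E := by
    rw [hμJ, Measure.map_apply (hS.prodMk hY) hE]
    rfl
  set p := (μJ E).toReal with hp
  have hp1 : p ≤ 1 := by
    rw [hp]
    exact ENNReal.toReal_le_of_le_ofReal zero_le_one (by simpa using prob_le_one)
  have hpc : (μJ Eᶜ).toReal = 1 - p := by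
    rw [prob_compl_eq_one_sub hE, ENNReal.toReal_sub_of_le prob_le_one ENNReal.one_ne_top]
    simp [hp]
  have hνEr : (ν E).toReal = 1/2 := by rw [hνE]; simp
  have hνEcr : (ν Eᶜ).toReal = 1/2 := by rw [hνEc]; simp
  have hkl : klBin p (1/2) ≤ ∫ x, llr μJ ν x ∂μJ := by
    have h1 := setKL μJ ν hAC hint' hE
    have h2 := setKL μJ ν hAC hint' hE.compl
    have hsplit : (∫ x in E, llr μJ ν x ∂μJ) + ∫ x in Eᶜ, llr μJ ν x ∂μJ
        = ∫ x, llr μJ ν x ∂μJ := integral_add_compl hE hint'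
    rw [hνEr, ← hp] at h1
    rw [hνEcr, hpc] at h2
    rw [klBin]
    have : (1 : ℝ) - 1/2 = 1/2 := by norm_num
    rw [this]
    linarith
  have hmain : klBin p (1/2) ≤ B := hkl.trans hIB
  rw [hpE]
  refine ⟨hmain, ?_⟩
  intro ps hps1 hps2 hps3
  by_contra hcon
  push_neg at hcon
  have hmono : Real.binEntropy p < Real.binEntropy ps := by
    apply Real.binEntropy_strictAntiOn _ _ hcon
    · exact ⟨by linarith, hps2.le⟩
    · exact ⟨by linarith, hp1⟩
  have h1 := klBin_half p
  have h2 := klBin_half ps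
  linarith [hmain, hps3.symm ▸ h2]


end
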